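/- arXiv:1811.05107 — 2 statements merged into one kernel-verified Lean document; each statement's English description precedes it below -/
import Mathlib

section
/- Coefficient formula for powers of the spectral-curve coordinate: for all positive integers μ and ν, the coefficient of z^ν in X(z)^μ ∈ R[[z]] equals (μ/ν) times the coefficient of z^{ν−μ} in the power series (1 − s z P′(z)) · exp(−μ s P(z)); in particular this coefficient vanishes when ν < μ and equals 1 when ν = μ. (This quantity is the pruning coefficient Ĉ(ν, μ).) -/
open scoped Classical

noncomputable section

/-- The coefficient ring `R = ℚ[s, q_1, …, q_d]`, with `s` the variable indexed by `none`
and `q_l` the variable indexed by `some (l-1)`. -/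
abbrev HurR (d : ℕ) : Type := MvPolynomial (Option (Fin d)) ℚ

/-- The variable `s`. -/
def sVar (d : ℕ) : HurR d := MvPolynomial.X none

/-- `qVar d l` is the variable `q_l` for `1 ≤ l ≤ d`, and `0` otherwise. -/
def qVar (d : ℕ) (l : ℕ) : HurR d :=
  if h : 0 < l ∧ l ≤ d then MvPolynomial.X (some ⟨l - 1, by omega⟩) else 0

/-- The number of cycles of a permutation, counting fixed points as cycles of length 1. -/
def cycleCount {G : Type*} [Fintype G] [DecidableEq G] (σ : Equiv.Perm G) : ℕ :=
  Multiset.card σ.cycleType + (Fintype.card G - σ.support.card)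

/-- The monomial `q_{λ_1} ⋯ q_{λ_ℓ}` attached to the full cycle type `(λ_1, …, λ_ℓ)` of a
permutation (fixed points counting as cycles of length 1, each contributing `q_1`). -/
def cycleWeight (d : ℕ) {G : Type*} [Fintype G] [DecidableEq G] (σ : Equiv.Perm G) : HurR d :=
  (σ.cycleType.map (qVar d)).prod * qVar d 1 ^ (Fintype.card G - σ.support.card)

/-- The length of the cycle of `σ` containing `x`. -/
def cycleLen {G : Type*} [Fintype G] [DecidableEq G] (σ : Equiv.Perm G) (x : G) : ℕ :=
  (Finset.univ.filter fun y => σ.SameCycle x y).card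

/-- The double Hurwitz number `DH_{g,n}(μ)`, for a family `μ` of positive integers indexed by a
finite type `ι` with `n = #ι`: the weighted count of tuples `(τ_0, τ_1, …, τ_m)` of permutations
of a set of cardinality `N = Σ μ_i` such that `τ_1, …, τ_m` are transpositions,
`τ_0 τ_1 ⋯ τ_m = ρ` for a fixed permutation `ρ` with `n` labelled cycles of lengths `μ_i`, the
subgroup generated acts transitively, every cycle of `τ_0` has length at most `d`, and
`m = 2g - 2 + n + ℓ` with `ℓ` the number of cycles of `τ_0`; each such tuple is weighted by
`s^m q_{λ_1} ⋯ q_{λ_ℓ} / (m! μ_1 ⋯ μ_n)` where `(λ_1, …, λ_ℓ)` is the cycle type of `τ_0`.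
By convention `DH = 0` for `g < 0`. -/
def DH (d : ℕ) (g : ℤ) {ι : Type} [Fintype ι] [DecidableEq ι] (μ : ι → ℕ) : HurR d :=
  if 0 ≤ g then
    ∑ m ∈ Finset.range ((2 * g).toNat + Fintype.card ι + (∑ i, μ i) + 1),
      ∑ τ : Fin (m + 1) → Equiv.Perm (Σ i, Fin (μ i)),
        if (∀ i, i ≠ 0 → (τ i).IsSwap) ∧
            (List.ofFn τ).prod = Equiv.sigmaCongrRight (fun i => finRotate (μ i)) ∧
            (∀ x y : (Σ i, Fin (μ i)), ∃ π ∈ Subgroup.closure (Set.range τ), π x = y) ∧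
            (∀ x, cycleLen (τ 0) x ≤ d) ∧
            (m : ℤ) = 2 * g - 2 + Fintype.card ι + cycleCount (τ 0)
        then ((m.factorial * ∏ i, μ i : ℚ))⁻¹ • (sVar d ^ m * cycleWeight d (τ 0))
        else 0
  else 0

/-- The formal exponential of a power series (intended for series with zero constant term). -/
def expPS {A : Type*} [CommRing A] [Algebra ℚ A] (f : PowerSeries A) : PowerSeries A :=
  PowerSeries.mk fun n =>
    ∑ k ∈ Finset.range (n + 1), (k.factorial : ℚ)⁻¹ • PowerSeries.coeff n (f ^ k)

/-- The polynomial `P(z) = q_1 z + q_2 z² + ⋯ + q_d z^d` as a power series. -/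
def Pser (d : ℕ) : PowerSeries (HurR d) := PowerSeries.mk fun n => qVar d n

/-- The formal derivative of a power series. -/
def dz {A : Type*} [CommSemiring A] (f : PowerSeries A) : PowerSeries A :=
  PowerSeries.mk fun n => ((n + 1 : ℕ) : A) * PowerSeries.coeff (n + 1) f

/-- The spectral curve coordinate `X(z) = z exp(-s P(z))`. -/
def Xser (d : ℕ) : PowerSeries (HurR d) :=
  PowerSeries.X * expPS (-(PowerSeries.C (sVar d) * Pser d))

/-- The power series `1 - s z P'(z)`. -/
def oneMinus (d : ℕ) : PowerSeries (HurR d) :=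
  1 - PowerSeries.C (sVar d) * PowerSeries.X * dz (Pser d)

/-- The inverse `(1 - s z P'(z))⁻¹` in `R[[z]]`. -/
def Wser (d : ℕ) : PowerSeries (HurR d) := PowerSeries.invOfUnit (oneMinus d) 1

/-- The one-variable series `f(z)`, placed in the `i`-th variable of an `n`-variable
formal power series ring. -/
def embVar {A : Type*} [CommRing A] {n : ℕ} (i : Fin n) (f : PowerSeries A) :
    MvPowerSeries (Fin n) A :=
  fun e => if ∀ j, j ≠ i → e j = 0 then PowerSeries.coeff (e i) f else 0

/-- The formal partial derivative `∂/∂z_i` of a multivariate power series. -/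
def pdz {A : Type*} [CommRing A] {n : ℕ} (i : Fin n) (f : MvPowerSeries (Fin n) A) :
    MvPowerSeries (Fin n) A :=
  fun e => ((e i + 1 : ℕ) : A) * MvPowerSeries.coeff (e + Finsupp.single i 1) f

/-- The derivative `∂/∂s`, applied coefficientwise to a power series over `R = ℚ[s,q]`. -/
def sderiv (d : ℕ) {n : ℕ} (f : MvPowerSeries (Fin n) (HurR d)) :
    MvPowerSeries (Fin n) (HurR d) :=
  fun e => MvPolynomial.pderiv none (MvPowerSeries.coeff e f)

/-- The formal logarithm `log(1 + u) = Σ_{k ≥ 1} (-1)^{k+1} u^k / k` (intended for series `u`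
with zero constant term). -/
def mvLog1p {A : Type*} [CommRing A] [Algebra ℚ A] {n : ℕ} (u : MvPowerSeries (Fin n) A) :
    MvPowerSeries (Fin n) A :=
  fun e => ∑ k ∈ Finset.Icc 1 (e.sum fun _ v => v),
    ((-1 : ℚ) ^ (k + 1) / k) • MvPowerSeries.coeff e (u ^ k)

/-- The free energy `F_{g,n}`, as a power series in the variables indexed by a subset `A` of the
`n` available variables (so that `n` may exceed the number of arguments of `F`). -/
def Fon (d : ℕ) (g : ℤ) {n : ℕ} (A : Finset (Fin n)) : MvPowerSeries (Fin n) (HurR d) :=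
  fun e => if (∀ j ∈ A, 0 < e j) ∧ (∀ j ∉ A, e j = 0) then DH d g (fun k : ↥A => e k.val) else 0

/-- The composite series `F_{g,1}(X(z))`. -/
def Fc1 (d : ℕ) (g : ℤ) : PowerSeries (HurR d) :=
  PowerSeries.mk fun ν => ∑ m ∈ Finset.Icc 1 ν,
    DH d g (fun _ : Fin 1 => m) * PowerSeries.coeff ν (Xser d ^ m)

/-- The composite series `F_{g,n}(X(z_1), …, X(z_n))`. -/
def FcFull (d : ℕ) (g : ℤ) (n : ℕ) : MvPowerSeries (Fin n) (HurR d) :=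
  fun e => ∑ μ ∈ Fintype.piFinset (fun i => Finset.Icc 1 (e i)),
    DH d g μ * ∏ i, PowerSeries.coeff (e i) (Xser d ^ μ i)

/-- The composite series `F_{g,#A}((X(z_k))_{k ∈ A})`, in the variables indexed by the
subset `A` of the `n` available variables. -/
def FcOn (d : ℕ) (g : ℤ) {n : ℕ} (A : Finset (Fin n)) : MvPowerSeries (Fin n) (HurR d) :=
  fun e => if ∀ j ∉ A, e j = 0 then
      ∑ μ ∈ Fintype.piFinset (fun k : ↥A => Finset.Icc 1 (e k.val)),
        DH d g μ * ∏ k : ↥A, PowerSeries.coeff (e k.val) (Xser d ^ μ k)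
    else 0

/-- The coefficient `[z^k] f` of a power series, for `k : ℤ`, with the convention that it
vanishes for `k < 0`. -/
def coeffZ {A : Type*} [CommRing A] (k : ℤ) (f : PowerSeries A) : A :=
  if 0 ≤ k then PowerSeries.coeff k.toNat f else 0

/-- The pruning coefficient `Ĉ(ν, μ) = (μ/ν) [z^{ν-μ}] ((1 - s z P'(z)) exp(-μ s P(z)))`. -/
def Chat (d : ℕ) (ν μ : ℕ) : HurR d :=
  ((μ : ℚ) / ν) • coeffZ ((ν : ℤ) - μ)
    (oneMinus d * expPS (-(PowerSeries.C ((μ : HurR d) * sVar d) * Pser d)))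

/-- The pruning coefficient `C(μ, ν) = (ν/μ) [z^{μ-ν}] exp(μ s P(z))`. -/
def Cco (d : ℕ) (μ ν : ℕ) : HurR d :=
  ((ν : ℚ) / μ) • coeffZ ((μ : ℤ) - ν)
    (expPS (PowerSeries.C ((μ : HurR d) * sVar d) * Pser d))

/-- The pruned double Hurwitz number
`PH_{g,n}(ν) = Σ_{μ ≤ ν} DH_{g,n}(μ) ∏_i Ĉ(ν_i, μ_i)`. -/
def PH (d : ℕ) (g : ℤ) {n : ℕ} (ν : Fin n → ℕ) : HurR d :=
  ∑ μ ∈ Fintype.piFinset (fun i => Finset.Icc 1 (ν i)), DH d g μ * ∏ i, Chat d (ν i) (μ i)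

set_option linter.unusedSectionVars false
set_option linter.unusedVariables false

namespace Aux

open PowerSeries

variable {A : Type*} [CommRing A] [Algebra ℚ A]

lemma coeff_derivativeFun' (f : PowerSeries A) (n : ℕ) :
    coeff n (derivativeFun f) = coeff (n + 1) f * (n + 1) := coeff_derivative f n

lemma derivativeFun_C' (a : A) : derivativeFun (C a) = 0 := derivative_C

lemma coeff_pow_eq_zero {f : PowerSeries A} (hf : constantCoeff f = 0) {n k : ℕ}
    (h : n < k) : coeff n (f ^ k) = 0 := by
  obtain ⟨g, rfl⟩ := X_dvd_iff.mpr hf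
  rw [mul_pow, coeff_X_pow_mul', if_neg (by omega)]

lemma coeff_expPS (f : PowerSeries A) (n : ℕ) :
    coeff n (expPS f) =
      ∑ k ∈ Finset.range (n + 1), (k.factorial : ℚ)⁻¹ • coeff n (f ^ k) := by
  rw [expPS, coeff_mk]

lemma constantCoeff_expPS (f : PowerSeries A) (hf : constantCoeff f = 0) :
    constantCoeff (expPS f) = 1 := by
  have : constantCoeff (expPS f) = coeff 0 (expPS f) := by
    simp [coeff_zero_eq_constantCoeff]
  rw [this, coeff_expPS]
  simp

/-- Extend the range of the exp sum: terms with `k > n` vanish. -/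
lemma coeff_expPS_ext (f : PowerSeries A) (hf : constantCoeff f = 0) (n N : ℕ) (hN : n < N) :
    coeff n (expPS f) =
      ∑ k ∈ Finset.range N, (k.factorial : ℚ)⁻¹ • coeff n (f ^ k) := by
  rw [coeff_expPS]
  apply Finset.sum_subset (Finset.range_subset_range.mpr (by omega))
  intro k hk1 hk
  simp only [Finset.mem_range] at hk
  rw [coeff_pow_eq_zero hf (by omega), smul_zero]

lemma dz_eq (f : PowerSeries A) : dz f = derivativeFun f := by
  ext n
  simp only [dz, coeff_mk, coeff_derivativeFun']
  push_cast
  ring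

lemma dzFun_neg (f : PowerSeries A) : derivativeFun (-f) = -derivativeFun f := by
  ext n
  rw [coeff_derivativeFun', map_neg, map_neg, coeff_derivativeFun', neg_mul]

lemma dzFun_C_mul (a : A) (f : PowerSeries A) :
    derivativeFun (C a * f) = C a * derivativeFun f := by
  rw [derivativeFun_mul, derivativeFun_C']
  simp [smul_eq_mul, mul_comm]

lemma ratNat_smul (m : ℕ) (x : A) : (m : ℚ) • x = (m : A) * x := by
  rw [Nat.cast_smul_eq_nsmul, nsmul_eq_mul]

lemma dz_pow (f : PowerSeries A) (k : ℕ) :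
    derivativeFun (f ^ (k + 1)) = (k + 1) • (f ^ k * derivativeFun f) := by
  induction k with
  | zero => simp
  | succ k ih =>
    rw [pow_succ, derivativeFun_mul, ih, smul_eq_mul, smul_eq_mul, mul_smul_comm, succ_nsmul,
      add_comm]
    have h : f * (f ^ k * derivativeFun f) = f ^ (k + 1) * derivativeFun f := by ring
    rw [h, succ_nsmul, succ_nsmul]

lemma dz_expPS (f : PowerSeries A) (hf : constantCoeff f = 0) :
    derivativeFun (expPS f) = derivativeFun f * expPS f := by
  ext n
  rw [coeff_derivativeFun']
  have lhs : coeff (n+1) (expPS f) * (n+1) =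
      ∑ k ∈ Finset.range (n+1), (k.factorial : ℚ)⁻¹ • coeff n (f ^ k * derivativeFun f) := by
    rw [coeff_expPS, Finset.sum_mul, Finset.sum_range_succ']
    have h0 : ((Nat.factorial 0 : ℚ))⁻¹ • coeff (n+1) (f ^ 0) * ((n : A) + 1) = 0 := by
      simp [coeff_one]
    rw [h0, add_zero]
    apply Finset.sum_congr rfl
    intro k _
    have hc : coeff (n+1) (f ^ (k+1)) * (↑n+1) = coeff n (derivativeFun (f ^ (k+1))) := by
      rw [coeff_derivativeFun']
    rw [smul_mul_assoc, hc, dz_pow, map_nsmul, ← Nat.cast_smul_eq_nsmul ℚ, smul_smul]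
    congr 1
    rw [Nat.factorial_succ]
    push_cast
    rw [mul_inv, mul_comm ((k:ℚ)+1)⁻¹, mul_assoc, inv_mul_cancel₀ (by positivity), mul_one]
  rw [lhs, coeff_mul]
  have rhs : ∀ p ∈ Finset.HasAntidiagonal.antidiagonal n, coeff p.1 (derivativeFun f) * coeff p.2 (expPS f)
      = ∑ k ∈ Finset.range (n+1), (k.factorial : ℚ)⁻¹ •
          (coeff p.1 (derivativeFun f) * coeff p.2 (f ^ k)) := by
    intro p hp
    rw [coeff_expPS_ext f hf p.2 (n+1) (by simp [Finset.mem_antidiagonal] at hp; omega),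
      Finset.mul_sum]
    exact Finset.sum_congr rfl fun k _ => mul_smul_comm _ _ _
  rw [Finset.sum_congr rfl rhs, Finset.sum_comm]
  apply Finset.sum_congr rfl
  intro k _
  rw [← Finset.smul_sum, ← coeff_mul, mul_comm]

lemma smul_cancel {x y : A} {c : ℚ} (hc : c ≠ 0) (h : c • x = c • y) : x = y := by
  have := congrArg (fun z => c⁻¹ • z) h
  simpa [smul_smul, inv_mul_cancel₀ hc] using this

lemma ode_unique (h F G : PowerSeries A) (h0 : constantCoeff F = constantCoeff G)
    (hF : derivativeFun F = h * F) (hG : derivativeFun G = h * G) : F = G := by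
  ext n
  induction n using Nat.strong_induction_on with
  | _ n ih =>
    match n with
    | 0 => simpa [coeff_zero_eq_constantCoeff] using h0
    | n + 1 =>
      have key : coeff n (h * F) = coeff n (h * G) := by
        rw [coeff_mul, coeff_mul]
        apply Finset.sum_congr rfl
        intro p hp
        rw [ih p.2 (by simp [Finset.mem_antidiagonal] at hp; omega)]
      have h2 : coeff (n+1) F * (n+1) = coeff (n+1) G * (n+1) := by
        rw [← coeff_derivativeFun', ← coeff_derivativeFun', hF, hG, key]
      have conv : ∀ x : A, x * ((n : A) + 1) = ((n : ℚ) + 1) • x := by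
        intro x
        rw [mul_comm]
        have h3 : ((n : A) + 1) = ((n + 1 : ℕ) : A) := by push_cast; ring
        rw [h3, ← nsmul_eq_mul, ← Nat.cast_smul_eq_nsmul ℚ]
        push_cast
        ring_nf
      rw [conv, conv] at h2
      exact smul_cancel (by positivity) h2

lemma dz_natCast_mul (m : ℕ) (f : PowerSeries A) :
    derivativeFun ((m : PowerSeries A) * f) = (m : PowerSeries A) * derivativeFun f := by
  have h : (m : PowerSeries A) = C (m : A) := by simp
  rw [h, derivativeFun_mul, derivativeFun_C']
  simp [smul_eq_mul, mul_comm]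

lemma constCoeff_natCast_mul (m : ℕ) (f : PowerSeries A) (hf : constantCoeff f = 0) :
    constantCoeff ((m : PowerSeries A) * f) = 0 := by
  rw [map_mul, hf, mul_zero]

lemma expPS_pow (f : PowerSeries A) (hf : constantCoeff f = 0) (m : ℕ) :
    expPS f ^ m = expPS ((m : PowerSeries A) * f) := by
  rcases Nat.eq_zero_or_pos m with rfl | hm
  · rw [pow_zero]
    ext n
    rw [coeff_expPS]
    rcases Nat.eq_zero_or_pos n with rfl | hn
    · simp
    · rw [coeff_one, if_neg (by omega)]
      refine (Finset.sum_eq_zero fun k _ => ?_).symm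
      rcases Nat.eq_zero_or_pos k with rfl | hk
      · simp [coeff_one, if_neg (by omega : ¬ n = 0)]
      · rw [Nat.cast_zero, zero_mul, zero_pow (by omega), map_zero, smul_zero]
  · obtain ⟨m', rfl⟩ : ∃ m', m = m' + 1 := ⟨m - 1, by omega⟩
    apply ode_unique (((m' + 1 : ℕ) : PowerSeries A) * derivativeFun f)
    · rw [map_pow, constantCoeff_expPS f hf, one_pow,
        constantCoeff_expPS _ (constCoeff_natCast_mul _ f hf)]
    · rw [dz_pow, dz_expPS f hf, ← Nat.cast_smul_eq_nsmul (PowerSeries A), smul_eq_mul]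
      push_cast
      ring
    · rw [dz_expPS _ (constCoeff_natCast_mul _ f hf), dz_natCast_mul]

end Aux

/-- Coefficient formula for powers of the spectral-curve coordinate:
for positive `μ` and `ν`, `[z^ν] X(z)^μ = (μ/ν) [z^{ν-μ}] ((1 - s z P'(z)) exp(-μ s P(z)))`,
with the convention `[z^k] = 0` for `k < 0`; in particular the coefficient vanishes when
`ν < μ` and equals `1` when `ν = μ`. -/
theorem coeff_Xpow (d : ℕ) (hd : 0 < d) (μ ν : ℕ) (hμ : 0 < μ) (hν : 0 < ν) :
    PowerSeries.coeff ν (Xser d ^ μ)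
        = ((μ : ℚ) / ν) • coeffZ ((ν : ℤ) - μ)
            (oneMinus d * expPS (-(PowerSeries.C ((μ : HurR d) * sVar d) * Pser d)))
      ∧ (ν < μ → PowerSeries.coeff ν (Xser d ^ μ) = 0)
      ∧ (ν = μ → PowerSeries.coeff ν (Xser d ^ μ) = 1) := by
  classical
  open PowerSeries in
  set S : PowerSeries (HurR d) := PowerSeries.C (sVar d) with hS
  have hP0 : PowerSeries.constantCoeff (Pser d) = 0 := by
    have : PowerSeries.constantCoeff (Pser d) = PowerSeries.coeff 0 (Pser d) := by
      simp
    rw [this, Pser, PowerSeries.coeff_mk, qVar, dif_neg (by omega)]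
  set f : PowerSeries (HurR d) := -(S * Pser d) with hfdef
  have hf0 : PowerSeries.constantCoeff f = 0 := by
    rw [hfdef, map_neg, map_mul, hP0, mul_zero, neg_zero]
  set g : PowerSeries (HurR d) :=
    -(PowerSeries.C ((μ : HurR d) * sVar d) * Pser d) with hgdef
  have hgf : g = (μ : PowerSeries (HurR d)) * f := by
    rw [hgdef, hfdef, map_mul, map_natCast]
    ring
  have hg0 : PowerSeries.constantCoeff g = 0 := by
    rw [hgf, map_mul, hf0, mul_zero]
  have hXpow : Xser d ^ μ = PowerSeries.X ^ μ * expPS g := by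
    rw [Xser, mul_pow, Aux.expPS_pow _ hf0, hgf]
  have hDE : PowerSeries.derivativeFun (expPS g)
      = -((μ : PowerSeries (HurR d)) * (S * dz (Pser d) * expPS g)) := by
    rw [Aux.dz_expPS g hg0, hgf, Aux.dz_natCast_mul, hfdef, Aux.dzFun_neg, Aux.dzFun_C_mul,
      ← Aux.dz_eq]
    ring
  have key : μ ≤ ν → (μ : ℚ) • PowerSeries.coeff (ν - μ) (oneMinus d * expPS g)
      = (ν : ℚ) • PowerSeries.coeff (ν - μ) (expPS g) := by
    intro hle
    have hone : oneMinus d * expPS g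
        = expPS g - PowerSeries.X * (S * dz (Pser d) * expPS g) := by
      rw [oneMinus]
      ring
    rw [hone, map_sub, smul_sub]
    rcases Nat.eq_zero_or_pos (ν - μ) with h0 | hpos
    · have hνμ : ν = μ := by omega
      rw [h0]
      have hX0 : PowerSeries.coeff 0
          (PowerSeries.X * (S * dz (Pser d) * expPS g)) = 0 := by
        rw [PowerSeries.coeff_zero_eq_constantCoeff, map_mul, PowerSeries.constantCoeff_X,
          zero_mul]
      rw [hX0, smul_zero, sub_zero, hνμ]
    · obtain ⟨m, hm⟩ : ∃ m, ν - μ = m + 1 := ⟨ν - μ - 1, by omega⟩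
      rw [hm, PowerSeries.coeff_succ_X_mul]
      have h1 : (μ : ℚ) • PowerSeries.coeff m (S * dz (Pser d) * expPS g)
          = PowerSeries.coeff m
              ((μ : PowerSeries (HurR d)) * (S * dz (Pser d) * expPS g)) := by
        have : (μ : PowerSeries (HurR d)) = PowerSeries.C (μ : HurR d) := by
          simp
        rw [this, PowerSeries.coeff_C_mul, Aux.ratNat_smul]
      have h2 : (μ : PowerSeries (HurR d)) * (S * dz (Pser d) * expPS g)
          = -(PowerSeries.derivativeFun (expPS g)) := by
        rw [hDE, neg_neg]
      rw [h1, h2, map_neg, Aux.coeff_derivativeFun']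
      have hν2 : ν = μ + (m + 1) := by omega
      rw [Aux.ratNat_smul, Aux.ratNat_smul, hν2]
      push_cast
      ring
  have hmain : PowerSeries.coeff ν (Xser d ^ μ)
      = ((μ : ℚ) / ν) • coeffZ ((ν : ℤ) - μ) (oneMinus d * expPS g) := by
    by_cases hle : μ ≤ ν
    · rw [hXpow, PowerSeries.coeff_X_pow_mul', if_pos hle]
      have hcz : coeffZ ((ν : ℤ) - μ) (oneMinus d * expPS g)
          = PowerSeries.coeff (ν - μ) (oneMinus d * expPS g) := by
        have hnn : (0 : ℤ) ≤ (ν : ℤ) - μ := by omega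
        rw [coeffZ, if_pos hnn]
        have htn : ((ν : ℤ) - μ).toNat = ν - μ := by omega
        rw [htn]
      rw [hcz]
      apply Aux.smul_cancel (c := (ν : ℚ)) (by positivity)
      rw [smul_smul]
      have hc : (ν : ℚ) * ((μ : ℚ) / ν) = (μ : ℚ) := by
        field_simp
      rw [hc, key hle]
    · rw [hXpow, PowerSeries.coeff_X_pow_mul', if_neg hle, coeffZ, if_neg (by omega), smul_zero]
  refine ⟨hmain, fun hlt => ?_, fun heq => ?_⟩
  · rw [hXpow, PowerSeries.coeff_X_pow_mul', if_neg (by omega)]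
  · subst heq
    rw [hXpow, PowerSeries.coeff_X_pow_mul', if_pos le_rfl, Nat.sub_self,
      PowerSeries.coeff_zero_eq_constantCoeff, Aux.constantCoeff_expPS g hg0]
end
end

section
/- Pruning correspondence, generating-function form: for all (g,n) with n ≥ 1 and (g,n) ≠ (0,1), and all positive integers ν_1, …, ν_n, the coefficient of z_1^{ν_1} ⋯ z_n^{ν_n} in F_{g,n}(X(z_1), …, X(z_n)) equals the pruned double Hurwitz number PH_{g,n}(ν_1, …, ν_n) := Σ_{μ_1=1}^{ν_1} ⋯ Σ_{μ_n=1}^{ν_n} DH_{g,n}(μ_1, …, μ_n) ∏_{i=1}^n Ĉ(ν_i, μ_i), where Ĉ(ν, μ) = (μ/ν) · [z^{ν−μ}] ( (1 − s z P′(z)) · exp(−μ s P(z)) ) ∈ R. In other words, F_{g,n}(X(z_1), …, X(z_n)) = Σ_{ν_1, …, ν_n ≥ 1} PH_{g,n}(ν_1, …, ν_n) ∏_{i=1}^n z_i^{ν_i}. -/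
open scoped Classical

noncomputable section

section Aux

open PowerSeries Finset

variable {A : Type*} [CommRing A] [Algebra ℚ A]

theorem coeff_expPS (f : PowerSeries A) (n : ℕ) :
    coeff n (expPS f) = ∑ k ∈ range (n + 1), (k.factorial : ℚ)⁻¹ • coeff n (f ^ k) :=
  coeff_mk _ _

theorem coeff_pow_zero_aux {f : PowerSeries A} (hf : constantCoeff f = 0)
    {p j : ℕ} (h : p < j) : coeff p (f ^ j) = 0 :=
  X_pow_dvd_iff.mp (pow_dvd_pow_of_dvd (X_dvd_iff.mpr hf) j) p h

theorem coeff_mul_pow_zero {f g : PowerSeries A} (hf : constantCoeff f = 0)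
    (hg : constantCoeff g = 0) {n j k : ℕ} (h : n < j + k) :
    coeff n (f ^ j * g ^ k) = 0 := by
  have hdvd : (PowerSeries.X : PowerSeries A) ^ (j + k) ∣ f ^ j * g ^ k := by
    rw [pow_add]
    exact mul_dvd_mul (pow_dvd_pow_of_dvd (X_dvd_iff.mpr hf) j)
      (pow_dvd_pow_of_dvd (X_dvd_iff.mpr hg) k)
  exact X_pow_dvd_iff.mp hdvd n h

theorem sum_tri {M : Type*} [AddCommMonoid M] (n : ℕ) (F : ℕ → ℕ → M)
    (hF : ∀ j k, n < j + k → F j k = 0) :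
    ∑ m ∈ range (n + 1), ∑ j ∈ range (m + 1), F j (m - j)
      = ∑ j ∈ range (n + 1), ∑ k ∈ range (n + 1), F j k := by
  have h1 : ∀ m : ℕ, ∑ j ∈ range (m + 1), F j (m - j)
      = ∑ p ∈ Finset.HasAntidiagonal.antidiagonal m, F p.1 p.2 := fun m =>
    (Finset.Nat.sum_antidiagonal_eq_sum_range_succ_mk (fun p => F p.1 p.2) m).symm
  simp_rw [h1]
  rw [← Finset.sum_biUnion (by
    intro a _ b _ hab
    simp only [Finset.disjoint_left]
    intro p hpa hpb
    rw [Finset.HasAntidiagonal.mem_antidiagonal] at hpa hpb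
    exact hab (hpa ▸ hpb ▸ rfl))]
  have hset : (range (n+1)).biUnion (fun m => Finset.HasAntidiagonal.antidiagonal m)
      = (range (n+1) ×ˢ range (n+1)).filter (fun p => p.1 + p.2 ≤ n) := by
    ext p
    simp only [Finset.mem_biUnion, Finset.mem_range, Finset.HasAntidiagonal.mem_antidiagonal,
      Finset.mem_filter, Finset.mem_product]
    constructor
    · rintro ⟨m, hm, hp⟩; omega
    · intro h; exact ⟨p.1 + p.2, by omega, rfl⟩
  rw [hset, Finset.sum_filter_of_ne (fun p _ hne => by
    by_contra hgt
    exact hne (hF p.1 p.2 (by omega))), Finset.sum_product]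

theorem fact_inv_choose {m j : ℕ} (h : j ≤ m) :
    (m.factorial : ℚ)⁻¹ * (m.choose j : ℚ) = (j.factorial : ℚ)⁻¹ * ((m - j).factorial : ℚ)⁻¹ := by
  have key : ((m.choose j : ℚ)) * j.factorial * (m - j).factorial = m.factorial := by
    exact_mod_cast congrArg (Nat.cast : ℕ → ℚ) (Nat.choose_mul_factorial_mul_factorial h)
  have h1 : (m.factorial : ℚ) ≠ 0 := Nat.cast_ne_zero.mpr m.factorial_ne_zero
  have h2 : (j.factorial : ℚ) ≠ 0 := Nat.cast_ne_zero.mpr j.factorial_ne_zero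
  have h3 : ((m - j).factorial : ℚ) ≠ 0 := Nat.cast_ne_zero.mpr (m - j).factorial_ne_zero
  field_simp
  linarith [key]

theorem expPS_add {f g : PowerSeries A} (hf : constantCoeff f = 0)
    (hg : constantCoeff g = 0) : expPS (f + g) = expPS f * expPS g := by
  ext n
  have hz : ∀ j k : ℕ, n < j + k →
      ((j.factorial : ℚ)⁻¹ * (k.factorial : ℚ)⁻¹) • coeff n (f ^ j * g ^ k) = 0 := by
    intro j k h; rw [coeff_mul_pow_zero hf hg h, smul_zero]
  have lhs : coeff n (expPS (f + g))
      = ∑ j ∈ range (n+1), ∑ k ∈ range (n+1),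
          ((j.factorial : ℚ)⁻¹ * (k.factorial : ℚ)⁻¹) • coeff n (f ^ j * g ^ k) := by
    rw [← sum_tri n _ hz, coeff_expPS]
    refine Finset.sum_congr rfl fun m hm => ?_
    rw [add_pow, map_sum, Finset.smul_sum]
    refine Finset.sum_congr rfl fun j hj => ?_
    rw [Finset.mem_range] at hj
    have hj' : j ≤ m := Nat.lt_succ_iff.mp hj
    have hc : coeff n (f ^ j * g ^ (m - j) * ((m.choose j : ℕ) : PowerSeries A))
        = (m.choose j : ℚ) • coeff n (f ^ j * g ^ (m - j)) := by
      rw [mul_comm _ ((m.choose j : ℕ) : PowerSeries A), ← nsmul_eq_mul, map_nsmul,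
        ← Nat.cast_smul_eq_nsmul ℚ]
    rw [hc, smul_smul, fact_inv_choose hj']
  have rhs : coeff n (expPS f * expPS g)
      = ∑ j ∈ range (n+1), ∑ k ∈ range (n+1),
          ((j.factorial : ℚ)⁻¹ * (k.factorial : ℚ)⁻¹) • coeff n (f ^ j * g ^ k) := by
    rw [coeff_mul]
    have step : ∀ p ∈ Finset.HasAntidiagonal.antidiagonal n,
        coeff p.1 (expPS f) * coeff p.2 (expPS g)
          = ∑ j ∈ range (n+1), ∑ k ∈ range (n+1),
              ((j.factorial : ℚ)⁻¹ * (k.factorial : ℚ)⁻¹) •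
                (coeff p.1 (f ^ j) * coeff p.2 (g ^ k)) := by
      intro p hp
      rw [Finset.HasAntidiagonal.mem_antidiagonal] at hp
      have hp1 : p.1 + 1 ≤ n + 1 := by omega
      have hp2 : p.2 + 1 ≤ n + 1 := by omega
      rw [coeff_expPS, coeff_expPS,
        Finset.sum_subset (Finset.range_subset_range.mpr hp1) (fun j hj hj' => by
          simp only [Finset.mem_range] at hj hj'
          rw [coeff_pow_zero_aux hf (by omega), smul_zero]),
        Finset.sum_subset (Finset.range_subset_range.mpr hp2) (fun k hk hk' => by
          simp only [Finset.mem_range] at hk hk'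
          rw [coeff_pow_zero_aux hg (by omega), smul_zero]),
        Finset.sum_mul_sum]
      exact Finset.sum_congr rfl fun j _ => Finset.sum_congr rfl fun k _ =>
        smul_mul_smul_comm _ _ _ _
    rw [Finset.sum_congr rfl step, Finset.sum_comm]
    refine Finset.sum_congr rfl fun j _ => ?_
    rw [Finset.sum_comm]
    refine Finset.sum_congr rfl fun k _ => ?_
    rw [← Finset.smul_sum, ← coeff_mul]
  rw [lhs, rhs]

theorem expPS_zero : expPS (0 : PowerSeries A) = 1 := by
  ext n
  rw [coeff_expPS, Finset.sum_eq_single 0]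
  · simp
  · intro k _ hk; rw [zero_pow hk, map_zero, smul_zero]
  · simp

theorem expPS_pow {f : PowerSeries A} (hf : constantCoeff f = 0) (μ : ℕ) :
    expPS f ^ μ = expPS (μ • f) := by
  induction μ with
  | zero => simpa using expPS_zero.symm
  | succ k ih =>
      have hkf : constantCoeff (k • f) = 0 := by rw [map_nsmul, hf, smul_zero]
      rw [pow_succ, ih, succ_nsmul, expPS_add hkf hf]

theorem dz_eq (f : PowerSeries A) : dz f = PowerSeries.derivativeFun f := by
  ext n
  rw [dz, coeff_mk, show f.derivativeFun = PowerSeries.derivative A f from rfl,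
    PowerSeries.coeff_derivative]
  push_cast
  ring

theorem coeff_dz (f : PowerSeries A) (n : ℕ) :
    coeff n (dz f) = ((n + 1 : ℕ) : A) * coeff (n + 1) f := by
  rw [dz, coeff_mk]

theorem dz_expPS {f : PowerSeries A} (hf : constantCoeff f = 0) :
    dz (expPS f) = dz f * expPS f := by
  ext n
  have hterm : ∀ k : ℕ, coeff n (dz f * f ^ k)
      = (((k : ℚ) + 1))⁻¹ • (((n + 1 : ℕ) : A) * coeff (n + 1) (f ^ (k + 1))) := by
    intro k
    have hD : dz (f ^ (k + 1)) = (k + 1) • (f ^ k * dz f) := by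
      have h := Derivation.leibniz_pow (PowerSeries.derivative A) f (k + 1)
      simp only [Nat.add_sub_cancel, smul_eq_mul] at h
      rw [dz_eq, dz_eq]
      exact h
    have hsm : ((k : ℚ) + 1) • (dz f * f ^ k) = dz (f ^ (k + 1)) := by
      rw [hD, ← Nat.cast_smul_eq_nsmul ℚ]
      push_cast
      rw [mul_comm (dz f)]
    have : coeff n (dz f * f ^ k)
        = (((k : ℚ) + 1))⁻¹ • coeff n (dz (f ^ (k + 1))) := by
      rw [← hsm, LinearMap.map_smul_of_tower, inv_smul_smul₀ (by positivity)]
    rw [this, coeff_dz]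
  have rhs : coeff n (dz f * expPS f)
      = ∑ k ∈ range (n + 1), (k.factorial : ℚ)⁻¹ • coeff n (dz f * f ^ k) := by
    rw [coeff_mul]
    have step : ∀ p ∈ Finset.HasAntidiagonal.antidiagonal n,
        coeff p.1 (dz f) * coeff p.2 (expPS f)
          = ∑ k ∈ range (n + 1), (k.factorial : ℚ)⁻¹ •
              (coeff p.1 (dz f) * coeff p.2 (f ^ k)) := by
      intro p hp
      rw [Finset.HasAntidiagonal.mem_antidiagonal] at hp
      have hp2 : p.2 + 1 ≤ n + 1 := by omega
      rw [coeff_expPS,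
        Finset.sum_subset (Finset.range_subset_range.mpr hp2) (fun k hk hk' => by
          simp only [Finset.mem_range] at hk hk'
          rw [coeff_pow_zero_aux hf (by omega), smul_zero]),
        Finset.mul_sum]
      exact Finset.sum_congr rfl fun k _ => (mul_smul_comm _ _ _)
    rw [Finset.sum_congr rfl step, Finset.sum_comm]
    refine Finset.sum_congr rfl fun k _ => ?_
    rw [← Finset.smul_sum, ← coeff_mul]
  rw [rhs, coeff_dz, coeff_expPS, Finset.mul_sum, Finset.sum_range_succ']
  have h0 : ((n + 1 : ℕ) : A) * ((Nat.factorial 0 : ℚ)⁻¹ • coeff (n + 1) (f ^ 0)) = 0 := by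
    rw [pow_zero, coeff_one, if_neg (Nat.succ_ne_zero n)]
    simp
  rw [h0, add_zero]
  refine (Finset.sum_congr rfl fun k _ => ?_).symm
  rw [hterm k, smul_smul, mul_smul_comm]
  congr 1
  rw [Nat.factorial_succ]
  push_cast
  rw [mul_inv]
  ring

end Aux


section Main

open PowerSeries

theorem constantCoeff_Pser (d : ℕ) : PowerSeries.constantCoeff (Pser d) = 0 := by
  rw [Pser, ← PowerSeries.coeff_zero_eq_constantCoeff_apply, PowerSeries.coeff_mk]
  simp [qVar]

theorem dz_neg {A : Type*} [CommRing A] [Algebra ℚ A] (f : PowerSeries A) : dz (-f) = -dz f := by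
  ext n
  rw [map_neg, coeff_dz, coeff_dz, map_neg, mul_neg]

theorem dz_C_mul {A : Type*} [CommRing A] [Algebra ℚ A] (c : A) (f : PowerSeries A) :
    dz (PowerSeries.C c * f) = PowerSeries.C c * dz f := by
  ext n
  rw [coeff_dz, PowerSeries.coeff_C_mul, PowerSeries.coeff_C_mul, coeff_dz]
  ring

theorem coeff_Xser_pow (d : ℕ) {μ ν : ℕ} (hμ : 1 ≤ μ) (hμν : μ ≤ ν) :
    PowerSeries.coeff ν (Xser d ^ μ) = Chat d ν μ := by
  have hμ0 : (μ : ℚ) ≠ 0 := Nat.cast_ne_zero.mpr (by omega)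
  have hν0 : (ν : ℚ) ≠ 0 := Nat.cast_ne_zero.mpr (by omega)
  have hc0 : ∀ a : HurR d,
      PowerSeries.constantCoeff (-(PowerSeries.C a * Pser d)) = 0 := by
    intro a
    rw [map_neg, map_mul, PowerSeries.constantCoeff_C, constantCoeff_Pser, mul_zero, neg_zero]
  have hμf : μ • (-(PowerSeries.C (sVar d) * Pser d))
      = -(PowerSeries.C ((μ : HurR d) * sVar d) * Pser d) := by
    rw [smul_neg, ← smul_mul_assoc, ← map_nsmul, nsmul_eq_mul]
  have hXpow : Xser d ^ μ = PowerSeries.X ^ μ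
      * expPS (-(PowerSeries.C ((μ : HurR d) * sVar d) * Pser d)) := by
    rw [Xser, mul_pow, expPS_pow (hc0 _), hμf]
  set G := expPS (-(PowerSeries.C ((μ : HurR d) * sVar d) * Pser d)) with hG
  set k := ν - μ with hk
  have hνk : ν = k + μ := by omega
  have hlhs : PowerSeries.coeff ν (Xser d ^ μ) = PowerSeries.coeff k G := by
    rw [hXpow, hνk, PowerSeries.coeff_X_pow_mul]
  have hdzG : dz G = -(PowerSeries.C ((μ : HurR d) * sVar d)) * dz (Pser d) * G := by
    rw [hG, dz_expPS (hc0 _), dz_neg, dz_C_mul]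
    ring
  have hnatsm : ∀ (m : ℕ) (x : PowerSeries (HurR d)), ((m : ℚ)) • x = (m : PowerSeries (HurR d)) * x := by
    intro m x
    rw [Nat.cast_smul_eq_nsmul, nsmul_eq_mul]
  have hkey : PowerSeries.C (sVar d) * dz (Pser d) * G = -((μ : ℚ)⁻¹ • dz G) := by
    have h1 : dz G = -((μ : ℚ) • (PowerSeries.C (sVar d) * dz (Pser d) * G)) := by
      rw [hdzG, hnatsm, map_mul, map_natCast]
      ring
    rw [h1, smul_neg, inv_smul_smul₀ hμ0, neg_neg]
  have hT : PowerSeries.coeff k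
        (PowerSeries.X * (PowerSeries.C (sVar d) * dz (Pser d) * G))
      = -(((k : ℚ) / (μ : ℚ)) • PowerSeries.coeff k G) := by
    cases k with
    | zero =>
        rw [PowerSeries.coeff_zero_X_mul]
        simp
    | succ k' =>
        rw [PowerSeries.coeff_succ_X_mul, hkey, map_neg, LinearMap.map_smul_of_tower, coeff_dz]
        rw [show ((k' + 1 : ℕ) : HurR d) * PowerSeries.coeff (k' + 1) G
            = ((k' + 1 : ℕ) : ℚ) • PowerSeries.coeff (k' + 1) G from by
          rw [Nat.cast_smul_eq_nsmul, nsmul_eq_mul], smul_smul]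
        congr 1
        push_cast
        ring
  have hOne : PowerSeries.coeff k (oneMinus d * G)
      = PowerSeries.coeff k G
        + ((k : ℚ) / (μ : ℚ)) • PowerSeries.coeff k G := by
    rw [oneMinus, sub_mul, one_mul, map_sub,
      show PowerSeries.C (sVar d) * PowerSeries.X * dz (Pser d) * G
          = PowerSeries.X * (PowerSeries.C (sVar d) * dz (Pser d) * G) from by ring,
      hT]
    ring
  rw [hlhs, Chat, coeffZ, if_pos (by omega : (0 : ℤ) ≤ (ν : ℤ) - μ),
    show ((ν : ℤ) - μ).toNat = k from by omega, hOne, smul_add, smul_smul, ← add_smul,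
    show (μ : ℚ) / ν + (μ : ℚ) / ν * ((k : ℚ) / μ) = 1 from by
      have hcast : (ν : ℚ) = (k : ℚ) + μ := by exact_mod_cast congrArg (Nat.cast : ℕ → ℚ) hνk
      have hμpos : (0 : ℚ) < μ := by exact_mod_cast (by omega : 0 < μ)
      have hsum : (k : ℚ) + μ ≠ 0 := by positivity
      rw [hcast]
      field_simp
      ring,
    one_smul]

end Main

/-- Pruning correspondence, generating-function form: for `(g,n) ≠ (0,1)`,
the coefficient of `z_1^{ν_1} ⋯ z_n^{ν_n}` in `F_{g,n}(X(z_1), …, X(z_n))` equals the pruned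
double Hurwitz number `PH_{g,n}(ν_1, …, ν_n)`. -/
theorem pruning_correspondence (d : ℕ) (hd : 0 < d) (g n : ℕ) (hn : 1 ≤ n)
    (hgn : ¬(g = 0 ∧ n = 1)) (ν : Fin n → ℕ) (hν : ∀ i, 0 < ν i) :
    MvPowerSeries.coeff (Finsupp.equivFunOnFinite.symm ν) (FcFull d (g : ℤ) n)
      = PH d (g : ℤ) ν := by
  have hcoe : ∀ i, (Finsupp.equivFunOnFinite.symm ν) i = ν i := fun i => rfl
  rw [MvPowerSeries.coeff_apply]
  simp only [FcFull, PH, hcoe]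
  refine Finset.sum_congr rfl fun μs hμs => ?_
  rw [Fintype.mem_piFinset] at hμs
  refine congrArg _ (Finset.prod_congr rfl fun i _ => ?_)
  have h := hμs i
  rw [Finset.mem_Icc] at h
  exact coeff_Xser_pow d h.1 h.2
end
end
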